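/- Let n ∈ ℕ and let X be a positive element of M_n(S) where S is the algebra of rapidly decreasing double sequences (a Fréchet *-algebra under matrix product). If the operator square root X^{1/2} has all matrix entries in ℓ₂(ℤ₊^{d/2} × ℤ₊^{d/2}), then all entries of X^{1/2} are rapidly decreasing, i.e., X^{1/2} ∈ M_n(S). -/

import Mathlib

/-! Write `w_k = |k| + 1` for the weight in `r_m`. Since `R` is self-adjoint with
`R ∘ R = X`, the squared `ℓ²`-norm of the column of `R` at the basis vector `e_p` is
`‖R e_p‖² = ⟪X e_p, e_p⟫`, a diagonal entry of `X`, and by symmetry the same bound holds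
for the rows. Splitting the weight as `w_k^{2m} w_l^{2m} ≤ w_k^{4m} + w_l^{4m}` therefore
bounds `r_m(R_{ij})²` by weighted sums of the diagonals of `X_{ii}` and `X_{jj}`. These are
finite for every weight: by AM-GM `w^t x ≤ w^{4s} x² + w^{-2(d/2)}` with `s = t + d/2`, the
first terms sum to at most `r_s(X)²`, and `∑_k w_k^{-2(d/2)} ≤ (∑_n (n+1)^{-2})^{d/2} < ∞`. -/

open scoped ENNReal InnerProductSpace

/-- The index set `ℤ₊^{d/2}`. -/
abbrev Idx (d : ℕ) := Fin (d / 2) → ℕ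

/-- The Hilbert space `ℂⁿ ⊗ ℓ₂(ℤ₊^{d/2}) = ℓ₂(Fin n × ℤ₊^{d/2})`. -/
noncomputable abbrev MatH (n d : ℕ) := lp (fun _ : Fin n × Idx d => ℂ) 2

/-- The seminorm `r_m(a) = (Σ_{k,l} (|k|+1)^{2m} (|l|+1)^{2m} |a_{k,l}|²)^{1/2}`. -/
noncomputable def rsem (d m : ℕ) (a : Idx d → Idx d → ℂ) : ℝ≥0∞ :=
  (∑' k : Idx d, ∑' l : Idx d,
      ((∑ i, (k i : ℝ≥0∞)) + 1) ^ (2 * m) * ((∑ i, (l i : ℝ≥0∞)) + 1) ^ (2 * m) *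
        (‖a k l‖₊ : ℝ≥0∞) ^ 2) ^ (1 / 2 : ℝ)

/-- A double sequence is rapidly decreasing if all seminorms `r_m` are finite;
`S_d` is the Fréchet *-algebra of such sequences. -/
def RapidlyDecreasing (d : ℕ) (a : Idx d → Idx d → ℂ) : Prop :=
  ∀ m : ℕ, rsem d m a < ⊤

/-- The `(i,j)`-th block of the `n × n` operator matrix of an operator on
`ℂⁿ ⊗ ℓ₂(ℤ₊^{d/2})`, as a double sequence indexed by `ℤ₊^{d/2}`. -/
noncomputable def blockEntries (n d : ℕ) (X : MatH n d →L[ℂ] MatH n d)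
    (i j : Fin n) (k l : Idx d) : ℂ :=
  ⟪X (lp.single 2 (j, l) (1 : ℂ)), lp.single 2 (i, k) (1 : ℂ)⟫_ℂ

open scoped NNReal

theorem ENNReal.mul_le_sq_add_sq (a b : ℝ≥0∞) : a * b ≤ a ^ 2 + b ^ 2 := by
  rcases le_total a b with h | h
  · calc a * b ≤ b * b := by gcongr
      _ ≤ a ^ 2 + b ^ 2 := by rw [← sq]; exact le_add_self
  · calc a * b ≤ a * a := by gcongr
      _ ≤ a ^ 2 + b ^ 2 := by rw [← sq]; exact le_self_add

theorem ENNReal.tsum_diag_le_tsum_tsum {α : Type*} (F : α → α → ℝ≥0∞) :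
    ∑' k, F k k ≤ ∑' k, ∑' l, F k l := by
  rw [← ENNReal.tsum_prod' (f := fun p : α × α => F p.1 p.2)]
  exact ENNReal.tsum_comp_le_tsum_of_injective (f := fun k => (k, k))
    (fun _ _ h => congrArg Prod.fst h) (fun p : α × α => F p.1 p.2)

theorem ENNReal.tsum_tsum_mul_le {α β : Type*} (u : α → ℝ≥0∞) (v : β → ℝ≥0∞)
    (c : α → β → ℝ≥0∞) :
    ∑' k, ∑' l, u k * v l * c k l ≤
      ∑' k, u k ^ 2 * ∑' l, c k l + ∑' l, v l ^ 2 * ∑' k, c k l := by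
  calc ∑' k, ∑' l, u k * v l * c k l
      ≤ ∑' k, ∑' l, (u k ^ 2 * c k l + v l ^ 2 * c k l) := by
        gcongr with k l
        rw [← add_mul]
        gcongr
        exact ENNReal.mul_le_sq_add_sq _ _
    _ = _ := by
        simp only [ENNReal.tsum_add, ENNReal.tsum_mul_left]
        rw [ENNReal.tsum_comm (f := fun k l => v l ^ 2 * c k l)]
        simp only [ENNReal.tsum_mul_left]

theorem ENNReal.tsum_fin_pi_prod {α : Type*} (N : ℕ) (f : α → ℝ≥0∞) :
    ∑' k : Fin N → α, ∏ i, f (k i) = (∑' a, f a) ^ N := by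
  induction N with
  | zero => simp
  | succ N ih =>
    rw [← (Fin.consEquiv fun _ => α).tsum_eq, ENNReal.tsum_prod', pow_succ', ← ih,
      ← ENNReal.tsum_mul_right]
    simp [Fin.prod_univ_succ, ENNReal.tsum_mul_left]

theorem ENNReal.tsum_inv_nat_succ_sq_ne_top :
    ∑' n : ℕ, (((n : ℝ≥0∞) + 1) ^ 2)⁻¹ ≠ ⊤ := by
  have h : Summable fun n : ℕ => (((n : ℝ≥0) + 1) ^ 2)⁻¹ := by
    rw [← NNReal.summable_coe]
    push_cast
    exact_mod_cast (summable_nat_add_iff 1).2 (Real.summable_nat_pow_inv.2 (by norm_num : 1 < 2))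
  simpa [ENNReal.coe_inv] using ENNReal.tsum_coe_ne_top_iff_summable.2 h

theorem lp.tsum_nnnorm_sq {ι : Type*} {E : ι → Type*} [∀ i, NormedAddCommGroup (E i)]
    (f : lp E 2) : ∑' i, (‖f i‖₊ : ℝ≥0∞) ^ 2 = (‖f‖₊ : ℝ≥0∞) ^ 2 := by
  have h : HasSum (fun i => ‖f i‖₊ ^ 2) (‖f‖₊ ^ 2) := by
    rw [← NNReal.hasSum_coe]
    simpa using lp.hasSum_norm (p := 2) (by norm_num) f
  exact_mod_cast (ENNReal.hasSum_coe.2 h).tsum_eq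

noncomputable def weight (d : ℕ) (k : Idx d) : ℝ≥0∞ := (∑ i, (k i : ℝ≥0∞)) + 1

theorem one_le_weight (d : ℕ) (k : Idx d) : 1 ≤ weight d k := le_add_self

theorem weight_ne_top (d : ℕ) (k : Idx d) : weight d k ≠ ⊤ := by
  simp [weight]

theorem weight_ne_zero (d : ℕ) (k : Idx d) : weight d k ≠ 0 :=
  (one_pos.trans_le (one_le_weight d k)).ne'

theorem tsum_inv_weight_pow_ne_top (d : ℕ) :
    ∑' k : Idx d, (weight d k ^ (2 * (d / 2)))⁻¹ ≠ ⊤ := by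
  have hprod : ∀ k : Idx d,
      ∏ i, ((k i : ℝ≥0∞) + 1) ^ 2 ≤ weight d k ^ (2 * (d / 2)) := by
    intro k
    calc ∏ i, ((k i : ℝ≥0∞) + 1) ^ 2 ≤ ∏ _i : Fin (d / 2), weight d k ^ 2 := by
          gcongr with i
          unfold weight
          gcongr
          exact Finset.single_le_sum (f := fun i => (k i : ℝ≥0∞)) (by simp)
            (Finset.mem_univ i)
      _ = weight d k ^ (2 * (d / 2)) := by simp [pow_mul]
  refine ne_top_of_le_ne_top
    (ENNReal.pow_ne_top (n := d / 2) ENNReal.tsum_inv_nat_succ_sq_ne_top) ?_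
  rw [← ENNReal.tsum_fin_pi_prod]
  gcongr with k
  rw [← ENNReal.prod_inv_distrib fun _ _ _ _ _ => by simp]
  exact ENNReal.inv_le_inv.2 (hprod k)

theorem rsem_lt_top_iff (d m : ℕ) (a : Idx d → Idx d → ℂ) :
    rsem d m a < ⊤ ↔
      ∑' k, ∑' l,
        weight d k ^ (2 * m) * weight d l ^ (2 * m) * (‖a k l‖₊ : ℝ≥0∞) ^ 2 ≠ ⊤ := by
  rw [rsem, lt_top_iff_ne_top, ne_eq, ENNReal.rpow_eq_top_iff_of_pos (by norm_num)]
  rfl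

theorem weight_pow_mul_le (d t : ℕ) (k : Idx d) (x : ℝ≥0∞) :
    weight d k ^ t * x ≤
      weight d k ^ (2 * (t + d / 2)) * weight d k ^ (2 * (t + d / 2)) * x ^ 2 +
        (weight d k ^ (2 * (d / 2)))⁻¹ := by
  set w := weight d k
  have hsplit : w ^ t * x = w ^ (t + d / 2) * x * (w ^ (d / 2))⁻¹ := by
    rw [pow_add, mul_right_comm _ x, mul_assoc _ _ (w ^ (d / 2))⁻¹,
      ENNReal.mul_inv_cancel (pow_ne_zero _ (weight_ne_zero d k))
        (ENNReal.pow_ne_top (weight_ne_top d k)), mul_one]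
  rw [hsplit]
  refine (ENNReal.mul_le_sq_add_sq _ _).trans (add_le_add ?_ ?_)
  · rw [mul_pow, ← pow_mul, ← pow_add]
    gcongr
    · exact one_le_weight d k
    · omega
  · rw [← ENNReal.inv_pow, ← pow_mul, mul_comm]

theorem RapidlyDecreasing.tsum_weight_pow_mul_diag_ne_top {d : ℕ} {a : Idx d → Idx d → ℂ}
    (ha : RapidlyDecreasing d a) (t : ℕ) :
    ∑' k, weight d k ^ t * (‖a k k‖₊ : ℝ≥0∞) ≠ ⊤ := by
  set s := t + d / 2
  have hdiag :
      ∑' k, weight d k ^ (2 * s) * weight d k ^ (2 * s) * (‖a k k‖₊ : ℝ≥0∞) ^ 2 ≠ ⊤ :=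
    ne_top_of_le_ne_top ((rsem_lt_top_iff d s a).1 (ha s))
      (ENNReal.tsum_diag_le_tsum_tsum fun k l =>
        weight d k ^ (2 * s) * weight d l ^ (2 * s) * (‖a k l‖₊ : ℝ≥0∞) ^ 2)
  refine ne_top_of_le_ne_top (ENNReal.add_ne_top.2 ⟨hdiag, tsum_inv_weight_pow_ne_top d⟩) ?_
  rw [← ENNReal.tsum_add]
  exact ENNReal.tsum_le_tsum fun k => weight_pow_mul_le d t k _

theorem RapidlyDecreasing.of_tsum_sq_le_diag {d : ℕ} {a b c : Idx d → Idx d → ℂ}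
    (hb : RapidlyDecreasing d b) (hc : RapidlyDecreasing d c)
    (hrow : ∀ k, ∑' l, (‖a k l‖₊ : ℝ≥0∞) ^ 2 ≤ ‖b k k‖₊)
    (hcol : ∀ l, ∑' k, (‖a k l‖₊ : ℝ≥0∞) ^ 2 ≤ ‖c l l‖₊) :
    RapidlyDecreasing d a := by
  intro m
  rw [rsem_lt_top_iff]
  refine ne_top_of_le_ne_top (ENNReal.add_ne_top.2
    ⟨hb.tsum_weight_pow_mul_diag_ne_top (2 * m * 2),
      hc.tsum_weight_pow_mul_diag_ne_top (2 * m * 2)⟩) ?_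
  refine (ENNReal.tsum_tsum_mul_le _ _ _).trans ?_
  simp only [← pow_mul]
  gcongr with k l
  · exact hrow k
  · exact hcol l

section blockEntries

variable {n d : ℕ}

theorem nnnorm_blockEntries (T : MatH n d →L[ℂ] MatH n d) (i j : Fin n) (k l : Idx d) :
    ‖blockEntries n d T i j k l‖₊ = ‖T (lp.single 2 (j, l) 1) (i, k)‖₊ := by
  simp [blockEntries, lp.inner_single_right]

theorem blockEntries_eq_conj_of_isSelfAdjoint {R : MatH n d →L[ℂ] MatH n d}
    (hR : IsSelfAdjoint R) (i j : Fin n) (k l : Idx d) :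
    blockEntries n d R i j k l = starRingEnd ℂ (blockEntries n d R j i l k) := by
  rw [blockEntries, blockEntries, inner_conj_symm]
  exact hR.isSymmetric _ _

theorem blockEntries_comp_self_diag {R : MatH n d →L[ℂ] MatH n d}
    (hR : IsSelfAdjoint R) (i : Fin n) (k : Idx d) :
    blockEntries n d (R.comp R) i i k k = (‖R (lp.single 2 (i, k) 1)‖ : ℂ) ^ 2 :=
  (hR.isSymmetric _ _).trans (inner_self_eq_norm_sq_to_K _)

theorem tsum_nnnorm_blockEntries_sq_le_col {R : MatH n d →L[ℂ] MatH n d}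
    (hR : IsSelfAdjoint R) (i j : Fin n) (l : Idx d) :
    ∑' k, (‖blockEntries n d R i j k l‖₊ : ℝ≥0∞) ^ 2 ≤
      ‖blockEntries n d (R.comp R) j j l l‖₊ := by
  set f := R (lp.single 2 (j, l) 1)
  calc ∑' k, (‖blockEntries n d R i j k l‖₊ : ℝ≥0∞) ^ 2
      = ∑' k, (‖f (i, k)‖₊ : ℝ≥0∞) ^ 2 := by
        simp only [nnnorm_blockEntries, f]
    _ ≤ ∑' p, (‖f p‖₊ : ℝ≥0∞) ^ 2 :=
        ENNReal.tsum_comp_le_tsum_of_injective (f := fun k => (i, k))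
          (fun _ _ h => congrArg Prod.snd h) fun p => (‖f p‖₊ : ℝ≥0∞) ^ 2
    _ = ‖blockEntries n d (R.comp R) j j l l‖₊ := by
        rw [lp.tsum_nnnorm_sq, blockEntries_comp_self_diag hR]
        simp [f]

theorem tsum_nnnorm_blockEntries_sq_le_row {R : MatH n d →L[ℂ] MatH n d}
    (hR : IsSelfAdjoint R) (i j : Fin n) (k : Idx d) :
    ∑' l, (‖blockEntries n d R i j k l‖₊ : ℝ≥0∞) ^ 2 ≤
      ‖blockEntries n d (R.comp R) i i k k‖₊ := by
  simp only [blockEntries_eq_conj_of_isSelfAdjoint hR i j k, RCLike.nnnorm_conj]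
  exact tsum_nnnorm_blockEntries_sq_le_col hR j i k

end blockEntries

theorem stmt10_general (d n : ℕ)
    (X R : MatH n d →L[ℂ] MatH n d)
    (hR : R.IsPositive) (hRR : R.comp R = X)
    (hXS : ∀ i j : Fin n, RapidlyDecreasing d (blockEntries n d X i j)) :
    ∀ i j : Fin n, RapidlyDecreasing d (blockEntries n d R i j) := by
  subst hRR
  intro i j
  exact (hXS i i).of_tsum_sq_le_diag (hXS j j)
    (tsum_nnnorm_blockEntries_sq_le_row hR.isSelfAdjoint i j)
    (tsum_nnnorm_blockEntries_sq_le_col hR.isSelfAdjoint i j)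

/-- Let `X` be a positive element of `M_n(S_d)`, i.e. a positive operator on
`ℂⁿ ⊗ ℓ₂(ℤ₊^{d/2})` all of whose blocks are rapidly decreasing.  If its operator
square root `X^{1/2}` has all matrix entries in `ℓ₂(ℤ₊^{d/2} × ℤ₊^{d/2})`, then all
blocks of `X^{1/2}` are rapidly decreasing, i.e. `X^{1/2} ∈ M_n(S_d)`. -/
theorem stmt10 (d n : ℕ) (hd : 0 < d) (hde : Even d) (hn : 0 < n)
    (X R : MatH n d →L[ℂ] MatH n d)
    (hX : X.IsPositive) (hR : R.IsPositive) (hRR : R.comp R = X)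
    (hXS : ∀ i j : Fin n, RapidlyDecreasing d (blockEntries n d X i j))
    (hRl2 : ∀ i j : Fin n, rsem d 0 (blockEntries n d R i j) ≠ ⊤) :
    ∀ i j : Fin n, RapidlyDecreasing d (blockEntries n d R i j) :=
  stmt10_general d n X R hR hRR hXS
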